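/- arXiv:2403.14378 — 5 statements merged into one kernel-verified Lean document; each statement's English description precedes it below -/
import Mathlib

section
/- Let X be a nonempty Baire separable metrizable space which is analytic or coanalytic (i.e., homeomorphic to an analytic, respectively coanalytic, subset of a Polish space). Then X has a dense subspace that is Polish (separable and completely metrizable). -/
open TopologicalSpace MeasureTheory Topology

/-- A space is *homogeneous* if its homeomorphism group acts transitively. -/
def HomogeneousSpace (X : Type*) [TopologicalSpace X] : Prop :=
  ∀ x y : X, ∃ h : X ≃ₜ X, h x = y

/-- A subset is a *homogeneous subspace* if it is homogeneous in the subspace topology. -/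
def HomogeneousSubspace {X : Type*} [TopologicalSpace X] (S : Set X) : Prop :=
  ∀ x y : S, ∃ h : ↥S ≃ₜ ↥S, h x = y

/-- A space is *zero-dimensional* if the clopen sets form a base. -/
def ZeroDimensionalSpace (X : Type*) [TopologicalSpace X] : Prop :=
  IsTopologicalBasis {s : Set X | IsClopen s}

/-- A space is *analytic* if it embeds onto an analytic subset of some Polish space. -/
def AnalyticSpace (X : Type*) [tX : TopologicalSpace X] : Prop :=
  ∃ (Z : Type) (tZ : TopologicalSpace Z), @PolishSpace Z tZ ∧
    ∃ j : X → Z, @IsEmbedding X Z tX tZ j ∧ @AnalyticSet Z tZ (Set.range j)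

/-- A space is *coanalytic* if it embeds onto the complement of an analytic subset of some
Polish space. -/
def CoanalyticSpace (X : Type*) [tX : TopologicalSpace X] : Prop :=
  ∃ (Z : Type) (tZ : TopologicalSpace Z), @PolishSpace Z tZ ∧
    ∃ j : X → Z, @IsEmbedding X Z tX tZ j ∧ @AnalyticSet Z tZ (Set.range j)ᶜ

/-- A space is *Borel* if it embeds onto a Borel subset of some Polish space. -/
def BorelSpacePaper (X : Type*) [tX : TopologicalSpace X] : Prop :=
  ∃ (Z : Type) (tZ : TopologicalSpace Z), @PolishSpace Z tZ ∧
    ∃ j : X → Z, @IsEmbedding X Z tX tZ j ∧ @MeasurableSet Z (@borel Z tZ) (Set.range j)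

/-- `A ∈ Σ¹₁(X)`: for some embedding `j` of `X` into a Polish space `Z`, `j '' A` is the
trace on `j '' X` of an analytic subset of `Z`. -/
def RelativelyAnalytic {X : Type*} [tX : TopologicalSpace X] (A : Set X) : Prop :=
  ∃ (Z : Type) (tZ : TopologicalSpace Z), @PolishSpace Z tZ ∧
    ∃ j : X → Z, @IsEmbedding X Z tX tZ j ∧
      ∃ A' : Set Z, @AnalyticSet Z tZ A' ∧ j '' A = A' ∩ Set.range j

/-- A subset of a space is `Σ¹₂` if it is a continuous image of a coanalytic subset of a
Polish space. -/
def Sigma12Set {Z : Type*} [tZ : TopologicalSpace Z] (s : Set Z) : Prop :=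
  ∃ (W : Type) (tW : TopologicalSpace W), @PolishSpace W tW ∧
    ∃ (C : Set W) (f : W → Z), @AnalyticSet W tW Cᶜ ∧ @ContinuousOn W Z tW tZ f C ∧ f '' C = s

/-- `A ∈ Δ¹₂(X)`: for some embedding `j` of `X` into a Polish space `Z`, both `j '' A` and
`j '' Aᶜ` are traces on `j '' X` of `Σ¹₂` subsets of `Z`. -/
def RelativelyDelta12 {X : Type*} [tX : TopologicalSpace X] (A : Set X) : Prop :=
  ∃ (Z : Type) (tZ : TopologicalSpace Z), @PolishSpace Z tZ ∧
    ∃ j : X → Z, @IsEmbedding X Z tX tZ j ∧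
      (∃ A' : Set Z, @Sigma12Set Z tZ A' ∧ j '' A = A' ∩ Set.range j) ∧
      (∃ B' : Set Z, @Sigma12Set Z tZ B' ∧ j '' Aᶜ = B' ∩ Set.range j)

/-- A space is *meager* if it is a meager subset of itself. -/
def MeagerSpace (X : Type*) [TopologicalSpace X] : Prop :=
  IsMeagre (Set.univ : Set X)

/-- A space is *Baire* if no non-empty open subset of it is meager (the definition used in
the paper). -/
def PaperBaireSpace (X : Type*) [TopologicalSpace X] : Prop :=
  ∀ U : Set X, IsOpen U → U.Nonempty → ¬ IsMeagre U

/-- A space is *nowhere countable* if it is non-empty and no non-empty open subset of it is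
countable. -/
def NowhereCountable (X : Type*) [TopologicalSpace X] : Prop :=
  Nonempty X ∧ ∀ U : Set X, IsOpen U → U.Nonempty → ¬ U.Countable

/-- The iterated Cantor–Bendixson derivative of a space: `cbDeriv X 0 = X`,
`cbDeriv X (ξ+1)` is `cbDeriv X ξ` minus its isolated points, and intersections are taken
at limit stages. -/
noncomputable def cbDeriv (X : Type*) [TopologicalSpace X] (o : Ordinal.{0}) : Set X :=
  Ordinal.limitRecOn o Set.univ
    (fun _ ih => {x ∈ ih | x ∈ closure (ih \ {x})})
    (fun o _ ih => ⋂ (p : Set.Iio o), ih p.1 p.2)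

/-- A space is *scattered* if some iterated Cantor–Bendixson derivative of it is empty. -/
def ScatteredSpace (X : Type*) [TopologicalSpace X] : Prop :=
  ∃ o : Ordinal.{0}, cbDeriv X o = ∅

/-- A space is *n-discrete* if it is the union of `n` discrete subspaces. -/
def NDiscrete (n : ℕ) (X : Type*) [TopologicalSpace X] : Prop :=
  ∃ D : Fin n → Set X, (∀ k, DiscreteTopology ↥(D k)) ∧ ⋃ k, D k = Set.univ

/-- A space is *n-homogeneous* if it is the union of `n` homogeneous subspaces. -/
def NHomogeneous (n : ℕ) (X : Type*) [TopologicalSpace X] : Prop :=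
  ∃ Y : Fin n → Set X, (∀ k, HomogeneousSubspace (Y k)) ∧ ⋃ k, Y k = Set.univ

/-- A space is *σ-homogeneous* if it is the union of countably many homogeneous
subspaces. -/
def SigmaHomogeneous (X : Type*) [TopologicalSpace X] : Prop :=
  ∃ Y : ℕ → Set X, (∀ n, HomogeneousSubspace (Y n)) ∧ ⋃ n, Y n = Set.univ

/-- An `Fσ` subset: a countable union of closed sets. -/
def IsFsigma {X : Type*} [TopologicalSpace X] (s : Set X) : Prop :=
  ∃ F : ℕ → Set X, (∀ n, IsClosed (F n)) ∧ s = ⋃ n, F n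

/-!
Embed `X` in a Polish space; inside the closure `C` of its image, `X` is dense. Analytic sets
have the Baire property, being the Souslin operation applied to closed sets, and the Souslin
operation preserves the Baire property; hence so do coanalytic sets. A dense Baire subspace of
`C` with the Baire property is comeagre in `C`, so it contains a dense `Gδ` subset of `C`, which
is Polish and still dense in `X`.
-/

open Set Filter PiNat

section BaireHull

variable {α : Type*} [TopologicalSpace α]

lemma Filter.EventuallyEq.isMeagre_diff {s t : Set α} (h : s =ᵇ t) : IsMeagre (s \ t) :=
  (eventuallyEq_set.1 h).mono fun _ hx hxd => hxd.2 (hx.1 hxd.1)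

lemma IsClosed.baireMeasurableSet {s : Set α} (hs : IsClosed s) : BaireMeasurableSet s :=
  hs.isOpen_compl.baireMeasurableSet.of_compl

def baireKernel (s : Set α) : Set α :=
  {x | ∀ u, IsOpen u → x ∈ u → ¬IsMeagre (u ∩ s)}

lemma isClosed_baireKernel (s : Set α) : IsClosed (baireKernel s) := by
  rw [← isOpen_compl_iff, isOpen_iff_forall_mem_open]
  intro x hx
  simp only [baireKernel, mem_compl_iff, mem_ofPred_eq, not_forall, not_not] at hx
  obtain ⟨u, hu, hxu, hmeagre⟩ := hx
  exact ⟨u, fun y hy hyK => hyK u hu hy hmeagre, hu, hxu⟩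

lemma isMeagre_diff_baireKernel [SecondCountableTopology α] (s : Set α) :
    IsMeagre (s \ baireKernel s) := by
  have hcover :
      s \ baireKernel s ⊆ ⋃ b ∈ {b ∈ countableBasis α | IsMeagre (b ∩ s)}, b ∩ s := by
    rintro x ⟨hxs, hx⟩
    simp only [baireKernel, mem_ofPred_eq, not_forall, not_not] at hx
    obtain ⟨u, hu, hxu, hmeagre⟩ := hx
    obtain ⟨b, hb, hxb, hbu⟩ := (isBasis_countableBasis α).exists_subset_of_mem_open hxu hu
    exact mem_biUnion ⟨hb, hmeagre.mono (inter_subset_inter_left _ hbu)⟩ ⟨hxb, hxs⟩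
  exact (isMeagre_biUnion ((countable_countableBasis α).mono (sep_subset _ _))
    fun _ hb => hb.2).mono hcover

def baireHull (s : Set α) : Set α := s ∪ baireKernel s

lemma subset_baireHull (s : Set α) : s ⊆ baireHull s := subset_union_left

lemma baireMeasurableSet_baireHull [SecondCountableTopology α] (s : Set α) :
    BaireMeasurableSet (baireHull s) := by
  rw [baireHull, ← sdiff_union_self]
  exact (isMeagre_diff_baireKernel s).baireMeasurableSet.union
    (isClosed_baireKernel s).baireMeasurableSet

lemma isMeagre_baireHull_diff {s t : Set α} (hst : s ⊆ t) (ht : BaireMeasurableSet t) :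
    IsMeagre (baireHull s \ t) := by
  obtain ⟨u, hu, htu⟩ := ht.residualEq_isOpen
  have hkernel : baireKernel s ⊆ closure u := by
    intro x hx
    by_contra hxu
    refine hx _ isClosed_closure.isOpen_compl hxu (htu.isMeagre_diff.mono ?_)
    exact fun y ⟨hyu, hys⟩ => ⟨hst hys, fun h => hyu (subset_closure h)⟩
  have hclosure : closure u =ᵇ t := (closure_residualEq hu.isLocallyClosed).trans htu.symm
  refine hclosure.isMeagre_diff.mono ?_
  rintro x ⟨hxs | hxK, hxt⟩
  · exact absurd (hst hxs) hxt
  · exact ⟨hkernel hxK, hxt⟩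

end BaireHull

section Souslin

variable {α : Type*}

/-- Finite sequences are stored reversed, `res y n = [y (n - 1), …, y 0]`, so that extending one
is `List.cons`. -/
def souslin (P : List ℕ → Set α) : Set α := ⋃ y : ℕ → ℕ, ⋂ n, P (res y n)

def souslinFrom (P : List ℕ → Set α) (s : List ℕ) : Set α :=
  {x | ∃ y, res y s.length = s ∧ ∀ n, x ∈ P (res y n)}

lemma souslinFrom_nil (P : List ℕ → Set α) : souslinFrom P [] = souslin P := by
  ext x
  simp [souslinFrom, souslin]

lemma souslinFrom_subset (P : List ℕ → Set α) (s : List ℕ) : souslinFrom P s ⊆ P s := by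
  rintro x ⟨y, hys, hx⟩
  exact hys ▸ hx s.length

lemma souslinFrom_subset_iUnion_cons (P : List ℕ → Set α) (s : List ℕ) :
    souslinFrom P s ⊆ ⋃ k, souslinFrom P (k :: s) := by
  rintro x ⟨y, hys, hx⟩
  exact mem_iUnion.2 ⟨y s.length, y, by rw [List.length_cons, res_succ, hys], hx⟩

lemma exists_forall_res_mem {T : Set (List ℕ)} (hnil : [] ∈ T)
    (hcons : ∀ s ∈ T, ∃ k, k :: s ∈ T) : ∃ y : ℕ → ℕ, ∀ n, res y n ∈ T := by
  choose! next hnext using hcons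
  let branch : ℕ → List ℕ := fun n => Nat.rec [] (fun _ s => next s :: s) n
  have hbranch : ∀ n, branch n ∈ T := by
    intro n
    induction n with
    | zero => exact hnil
    | succ n ih => exact hnext _ ih
  refine ⟨fun n => next (branch n), fun n => ?_⟩
  have hres : res (fun n => next (branch n)) n = branch n := by
    induction n with
    | zero => rfl
    | succ n ih => rw [res_succ, ih]
  exact hres ▸ hbranch n

theorem baireMeasurableSet_souslin [TopologicalSpace α] [SecondCountableTopology α]
    {P : List ℕ → Set α} (hP : ∀ s, BaireMeasurableSet (P s)) :
    BaireMeasurableSet (souslin P) := by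
  let B s := baireHull (souslinFrom P s) ∩ P s
  have hB : ∀ s, BaireMeasurableSet (B s) := fun s =>
    (baireMeasurableSet_baireHull _).inter (hP s)
  have hsub : ∀ s, souslinFrom P s ⊆ B s := fun s =>
    subset_inter (subset_baireHull _) (souslinFrom_subset P s)
  let E := ⋃ s, B s \ ⋃ k, B (k :: s)
  have hE : IsMeagre E := isMeagre_iUnion fun s =>
    (isMeagre_baireHull_diff
      ((souslinFrom_subset_iUnion_cons P s).trans (iUnion_mono fun k => hsub (k :: s)))
      (.iUnion fun k => hB (k :: s))).mono (sdiff_subset_sdiff_left inter_subset_left)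
  -- off `E`, every `B s` containing `x` has a child `B (k :: s)` containing it: follow a branch
  have hdiff : B [] \ souslin P ⊆ E := by
    rintro x ⟨hx, hxP⟩
    by_contra hxE
    obtain ⟨y, hy⟩ := exists_forall_res_mem (T := {s | x ∈ B s}) hx fun s hs => by
      by_contra! h
      exact hxE (mem_iUnion.2 ⟨s, hs, by simpa using h⟩)
    exact hxP (mem_iUnion.2 ⟨y, mem_iInter.2 fun n => (hy n).2⟩)
  have hsouslin : souslin P = B [] \ (B [] \ souslin P) :=
    (sdiff_sdiff_cancel_left (souslinFrom_nil P ▸ hsub [])).symm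
  rw [hsouslin]
  exact (hB []).diff (hE.mono hdiff).baireMeasurableSet

end Souslin

section Analytic

lemma PiNat.hasBasis_nhds_cylinder {E : ℕ → Type*} [∀ n, TopologicalSpace (E n)]
    [∀ n, DiscreteTopology (E n)] (x : ∀ n, E n) :
    (𝓝 x).HasBasis (fun _ => True) (cylinder x) := by
  refine ⟨fun s => ⟨fun hs => ?_, fun ⟨n, _, hn⟩ =>
    mem_of_superset ((isOpen_cylinder E x n).mem_nhds (self_mem_cylinder x n)) hn⟩⟩
  obtain ⟨_, ⟨z, n, rfl⟩, hxz, hs⟩ := (isTopologicalBasis_cylinders E).mem_nhds_iff.1 hs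
  exact ⟨n, trivial, mem_cylinder_iff_eq.1 hxz ▸ hs⟩

variable {α : Type*} [TopologicalSpace α] [T2Space α]

lemma range_eq_souslin_closure_image {f : (ℕ → ℕ) → α} (hf : Continuous f) :
    range f = souslin fun s => closure (f '' {y | res y s.length = s}) := by
  refine Subset.antisymm (fun _ ⟨y, hy⟩ => mem_iUnion.2 ⟨y, mem_iInter.2 fun n =>
    subset_closure ⟨y, by simp, hy⟩⟩) ?_
  intro x hx
  obtain ⟨y, hy⟩ := mem_iUnion.1 hx
  simp only [res_length, mem_iInter, ← cylinder_eq_res] at hy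
  have hcluster : ClusterPt x (map f (𝓝 y)) := by
    refine clusterPt_iff_forall_mem_closure.2 fun s hs => ?_
    obtain ⟨n, -, hn⟩ := ((hasBasis_nhds_cylinder y).map f).mem_iff.1 hs
    exact closure_mono hn (hy n)
  exact ⟨y, (eq_of_nhds_neBot (hcluster.mono hf.continuousAt)).symm⟩

theorem MeasureTheory.AnalyticSet.baireMeasurableSet [SecondCountableTopology α] {s : Set α}
    (hs : AnalyticSet s) : BaireMeasurableSet s := by
  rw [AnalyticSet] at hs
  obtain rfl | ⟨f, hf, rfl⟩ := hs
  · exact IsMeagre.empty.baireMeasurableSet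
  rw [range_eq_souslin_closure_image hf]
  exact baireMeasurableSet_souslin fun _ => isClosed_closure.baireMeasurableSet

end Analytic

theorem IsGδ.polishSpace {α : Type*} [TopologicalSpace α] [PolishSpace α] {s : Set α}
    (hs : IsGδ s) : PolishSpace s := by
  obtain ⟨u, hu, rfl⟩ := isGδ_iff_eq_iInter_nat.1 hs
  have : ∀ n, PolishSpace (u n) := fun n => (hu n).polishSpace
  let φ : (⋂ n, u n : Set α) → ∀ n, u n := fun x n => ⟨x, mem_iInter.1 x.2 n⟩
  have hφ : Continuous φ := continuous_pi fun n => continuous_subtype_val.subtype_mk _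
  have hinducing : IsInducing φ :=
    .of_comp hφ (continuous_apply 0).subtype_val IsInducing.subtypeVal
  have hrange : range φ = {w | ∀ n, (w n : α) = w 0} := by
    refine Subset.antisymm (fun _ ⟨x, hx⟩ n => hx ▸ rfl) fun w hw => ?_
    exact ⟨⟨w 0, mem_iInter.2 fun n => hw n ▸ (w n).2⟩,
      funext fun n => Subtype.ext (hw n).symm⟩
  refine IsClosedEmbedding.polishSpace (f := φ) ⟨⟨hinducing, fun x y h => ?_⟩, ?_⟩
  · exact Subtype.ext (congrArg (fun w => (w 0 : α)) h)
  · rw [hrange, ofPred_forall]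
    exact isClosed_iInter fun n =>
      isClosed_eq (continuous_apply n).subtype_val (continuous_apply 0).subtype_val

section DenseEmbedding

variable {X C : Type*} [TopologicalSpace X] [TopologicalSpace C] {e : X → C}

lemma Topology.IsInducing.tendsto_residual (he : IsInducing e) (hd : DenseRange e) :
    Tendsto e (residual X) (residual C) := by
  refine le_countableGenerate_iff_of_countableInterFilter.2 fun t ⟨ht, htd⟩ => ?_
  refine residual_of_dense_open (ht.preimage he.continuous) (he.dense_iff.2 fun x => ?_)
  rw [image_preimage_eq_inter_range]
  exact closure_minimal (hd.open_subset_closure_inter ht) isClosed_closure (htd (e x))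

lemma IsMeagre.preimage_of_isInducing (he : IsInducing e) (hd : DenseRange e) {s : Set C}
    (hs : IsMeagre s) : IsMeagre (e ⁻¹' s) :=
  he.tendsto_residual hd hs

lemma range_mem_residual_of_paperBaireSpace (hX : PaperBaireSpace X) (he : IsInducing e)
    (hd : DenseRange e) (hrange : BaireMeasurableSet (range e)) : range e ∈ residual C := by
  obtain ⟨u, hu, hrange_u⟩ := hrange.residualEq_isOpen
  have hud : Dense u := by
    by_contra hud
    have hV : ((closure u)ᶜ).Nonempty := nonempty_compl.2 (mt dense_iff_closure_eq.2 hud)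
    obtain ⟨x, hx⟩ := hd.exists_mem_open isClosed_closure.isOpen_compl hV
    refine hX _ (isClosed_closure.isOpen_compl.preimage he.continuous) ⟨x, hx⟩
      ((hrange_u.isMeagre_diff.preimage_of_isInducing he hd).mono ?_)
    exact fun y hy => ⟨mem_range_self y, fun h => hy (subset_closure h)⟩
  filter_upwards [residual_of_dense_open hu hud, hrange_u.symm.isMeagre_diff] with x hxu hx
  by_contra hxe
  exact hx ⟨hxu, hxe⟩

lemma exists_dense_polishSpace_of_range_mem_residual [PolishSpace C] (he : IsEmbedding e)
    (hres : range e ∈ residual C) : ∃ D : Set X, Dense D ∧ PolishSpace D := by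
  obtain ⟨G, hGe, hGδ, hGd⟩ := mem_residual.1 hres
  have : PolishSpace G := hGδ.polishSpace
  refine ⟨e ⁻¹' G, he.isInducing.dense_iff.2 fun x => ?_, ?_⟩
  · rw [image_preimage_eq_of_subset hGe, hGd.closure_eq]
    exact mem_univ _
  · refine IsClosedEmbedding.polishSpace (f := G.restrictPreimage e)
      ⟨he.restrictPreimage G, ?_⟩
    rw [range_restrictPreimage, preimage_val_eq_univ_of_subset hGe]
    exact isClosed_univ

end DenseEmbedding

lemma exists_dense_polishSpace_of_isEmbedding {X Z : Type*} [TopologicalSpace X]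
    [TopologicalSpace Z] [PolishSpace Z] (hX : PaperBaireSpace X) {j : X → Z}
    (hj : IsEmbedding j) (hA : AnalyticSet (range j) ∨ AnalyticSet (range j)ᶜ) :
    ∃ D : Set X, Dense D ∧ PolishSpace D := by
  let C := closure (range j)
  have : PolishSpace C := isClosed_closure.polishSpace
  have hjC : ∀ x, j x ∈ C := fun x => subset_closure (mem_range_self x)
  have he : IsEmbedding (codRestrict j C hjC) := hj.codRestrict C hjC
  have hd : DenseRange (codRestrict j C hjC) := by
    rw [DenseRange, range_codRestrict, Subtype.dense_iff, image_preimage_eq_inter_range,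
      Subtype.range_val, inter_eq_left.2 subset_closure]
  have hBM : BaireMeasurableSet (range (codRestrict j C hjC)) := by
    rw [range_codRestrict]
    rcases hA with hA | hA
    · exact (hA.preimage continuous_subtype_val).baireMeasurableSet
    · exact .of_compl (hA.preimage continuous_subtype_val).baireMeasurableSet
  exact exists_dense_polishSpace_of_range_mem_residual he
    (range_mem_residual_of_paperBaireSpace hX he.isInducing hd hBM)

theorem baire_analytic_or_coanalytic_has_dense_polish_subspace_general
    (X : Type) [TopologicalSpace X]
    (hBaire : PaperBaireSpace X) (hdef : AnalyticSpace X ∨ CoanalyticSpace X) :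
    ∃ D : Set X, Dense D ∧ PolishSpace ↥D := by
  obtain ⟨Z, _, _, j, hj, hA⟩ | ⟨Z, _, _, j, hj, hA⟩ := hdef
  · exact exists_dense_polishSpace_of_isEmbedding hBaire hj (.inl hA)
  · exact exists_dense_polishSpace_of_isEmbedding hBaire hj (.inr hA)

/-- Every nonempty Baire separable metrizable space that is analytic or coanalytic has a
dense Polish subspace. -/
theorem baire_analytic_or_coanalytic_has_dense_polish_subspace
    (X : Type) [TopologicalSpace X] [MetrizableSpace X] [SeparableSpace X] [Nonempty X]
    (hBaire : PaperBaireSpace X) (hdef : AnalyticSpace X ∨ CoanalyticSpace X) :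
    ∃ D : Set X, Dense D ∧ PolishSpace ↥D :=
  baire_analytic_or_coanalytic_has_dense_polish_subspace_general X hBaire hdef
end

section
/- Let n be a positive natural number and let X be a scattered separable metrizable space of Cantor–Bendixson rank exactly n. Then X is n-discrete (X is the union of n discrete subspaces) but not ℓ-discrete for any ℓ < n. -/
open TopologicalSpace MeasureTheory Topology

section CBAux

variable {X : Type*} [TopologicalSpace X]

/-- The derived-set operation. -/
def cbD (A : Set X) : Set X := {x ∈ A | x ∈ closure (A \ {x})}

lemma cbD_subset (A : Set X) : cbD A ⊆ A := fun _ hx => hx.1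

lemma cbD_mono {A B : Set X} (h : A ⊆ B) : cbD A ⊆ cbD B := by
  intro x hx
  exact ⟨h hx.1, closure_mono (Set.diff_subset_diff_left h) hx.2⟩

lemma cbD_iter_mono {A B : Set X} (h : A ⊆ B) (k : ℕ) : cbD^[k] A ⊆ cbD^[k] B := by
  induction k with
  | zero => exact h
  | succ k ih => rw [Function.iterate_succ']; exact cbD_mono ih

lemma cbD_iter_subset (A : Set X) (k : ℕ) : cbD^[k] A ⊆ A := by
  induction k with
  | zero => exact subset_rfl
  | succ k ih =>
      rw [Function.iterate_succ']
      exact (cbD_subset _).trans ih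

lemma cbD_singleton (x : X) : cbD ({x} : Set X) = ∅ := by
  ext y
  simp only [cbD, Set.mem_setOf_eq, Set.mem_singleton_iff, Set.mem_empty_iff_false,
    iff_false, not_and]
  rintro rfl
  simp

lemma cbD_inter_open {A G : Set X} (hG : IsOpen G) : cbD A ∩ G = cbD (A ∩ G) := by
  ext x
  constructor
  · rintro ⟨⟨hxA, hxc⟩, hxG⟩
    refine ⟨⟨hxA, hxG⟩, ?_⟩
    rw [mem_closure_iff] at hxc ⊢
    intro o ho hxo
    obtain ⟨y, ⟨hyo, hyG⟩, hyA, hyx⟩ := hxc (o ∩ G) (ho.inter hG) ⟨hxo, hxG⟩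
    exact ⟨y, hyo, ⟨hyA, hyG⟩, hyx⟩
  · rintro ⟨⟨hxA, hxG⟩, hxc⟩
    exact ⟨⟨hxA, closure_mono (Set.diff_subset_diff_left Set.inter_subset_left) hxc⟩, hxG⟩

lemma cbD_iter_inter_open {G : Set X} (hG : IsOpen G) (A : Set X) (k : ℕ) :
    cbD^[k] A ∩ G = cbD^[k] (A ∩ G) := by
  induction k with
  | zero => rfl
  | succ k ih =>
      rw [Function.iterate_succ', Function.comp_apply, Function.comp_apply,
        cbD_inter_open hG, ih]

lemma cbD_union_singleton [T1Space X] (A : Set X) (x : X) :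
    cbD (A ∪ {x}) ⊆ cbD A ∪ {x} := by
  intro y ⟨hyA, hyc⟩
  by_cases hyx : y = x
  · exact Or.inr hyx
  · left
    have hA : y ∈ A := hyA.resolve_right hyx
    refine ⟨hA, ?_⟩
    have : (A ∪ {x}) \ {y} ⊆ (A \ {y}) ∪ {x} := by
      rintro z ⟨hz | hz, hzy⟩
      · exact Or.inl ⟨hz, hzy⟩
      · exact Or.inr hz
    have := (closure_mono this) hyc
    rw [closure_union, closure_singleton] at this
    rcases this with h | h
    · exact h
    · exact absurd h hyx

lemma cbD_iter_union_singleton [T1Space X] (A : Set X) (x : X) (k : ℕ) :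
    cbD^[k] (A ∪ {x}) ⊆ cbD^[k] A ∪ {x} := by
  induction k with
  | zero => exact subset_rfl
  | succ k ih =>
      rw [Function.iterate_succ', Function.comp_apply, Function.comp_apply]
      exact (cbD_mono ih).trans (cbD_union_singleton _ _)

/-- Discreteness of a subspace in terms of the derived-set operation. -/
lemma cbD_eq_empty_iff_discrete (D : Set X) :
    cbD D = ∅ ↔ DiscreteTopology ↥D := by
  rw [discreteTopology_subtype_iff]
  constructor
  · intro h x hxD
    by_contra hne
    have hb : (𝓝[≠] x ⊓ Filter.principal D).NeBot := ⟨hne⟩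
    have hx : x ∈ closure (D \ {x}) := by
      rw [mem_closure_iff_nhdsWithin_neBot]
      have : D \ {x} = {x}ᶜ ∩ D := by ext; simp [and_comm]
      rw [this, nhdsWithin_inter', nhdsWithin]
      exact hb
    exact absurd (h ▸ (show x ∈ cbD D from ⟨hxD, hx⟩)) (Set.notMem_empty x)
  · intro h
    ext x
    simp only [Set.mem_empty_iff_false, iff_false]
    rintro ⟨hxD, hxc⟩
    rw [mem_closure_iff_nhdsWithin_neBot] at hxc
    have : D \ {x} = {x}ᶜ ∩ D := by ext; simp [and_comm]
    rw [this, nhdsWithin_inter', nhdsWithin] at hxc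
    exact hxc.ne (h x hxD)

/-- Key lemma: an open set covered by `ℓ` discrete subspaces has empty `ℓ`-th derivative. -/
lemma cbD_iter_eq_empty_of_cover [T1Space X] :
    ∀ (ℓ : ℕ) (U : Set X), IsOpen U → ∀ D : Fin ℓ → Set X,
      (∀ k, cbD (D k) = ∅) → U ⊆ ⋃ k, D k → cbD^[ℓ] U = ∅ := by
  intro ℓ
  induction ℓ with
  | zero =>
      intro U _ D _ hcov
      have : U = ∅ := by
        rw [Set.eq_empty_iff_forall_notMem]
        intro x hx
        obtain ⟨k, -⟩ := Set.mem_iUnion.1 (hcov hx)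
        exact k.elim0
      simpa using this
  | succ ℓ ih =>
      intro U hU D hD hcov
      by_contra hne
      obtain ⟨x, hx⟩ := Set.nonempty_iff_ne_empty.2 hne
      have hxU : x ∈ U := cbD_iter_subset U (ℓ + 1) hx
      obtain ⟨j, hxDj⟩ := Set.mem_iUnion.1 (hcov hxU)
      -- an open set isolating x in D j
      have hxnc : x ∉ closure (D j \ {x}) := by
        intro hc
        exact absurd ((hD j) ▸ (show x ∈ cbD (D j) from ⟨hxDj, hc⟩)) (Set.notMem_empty x)
      set O : Set X := (closure (D j \ {x}))ᶜ with hO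
      have hOopen : IsOpen O := isOpen_compl_iff.2 isClosed_closure
      have hxO : x ∈ O := hxnc
      have hODj : O ∩ D j ⊆ {x} := by
        rintro y ⟨hyO, hyD⟩
        by_contra hyx
        exact hyO (subset_closure ⟨hyD, hyx⟩)
      set U₂ : Set X := U ∩ O with hU₂
      have hU₂open : IsOpen U₂ := hU.inter hOopen
      set W : Set X := U₂ \ {x} with hW
      have hWopen : IsOpen W := hU₂open.inter (isClosed_singleton.isOpen_compl)
      -- x ∈ cbD^[ℓ+1] U₂
      have hx2 : x ∈ cbD^[ℓ + 1] U₂ := by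
        rw [hU₂, ← cbD_iter_inter_open hOopen]
        exact ⟨hx, hxO⟩
      -- W is covered by the remaining ℓ discrete sets
      have hWcov : W ⊆ ⋃ i : Fin ℓ, D (j.succAbove i) := by
        rintro y ⟨⟨hyU, hyO⟩, hyx⟩
        obtain ⟨k, hyk⟩ := Set.mem_iUnion.1 (hcov hyU)
        have hkj : k ≠ j := by
          rintro rfl
          exact hyx (hODj ⟨hyO, hyk⟩)
        obtain ⟨i, hi⟩ := Fin.exists_succAbove_eq hkj
        exact Set.mem_iUnion.2 ⟨i, by rw [hi]; exact hyk⟩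
      have hWempty : cbD^[ℓ] W = ∅ :=
        ih W hWopen (fun i => D (j.succAbove i)) (fun i => hD _) hWcov
      have hsub : U₂ ⊆ W ∪ {x} := by
        intro y hy
        by_cases hyx : y = x
        · exact Or.inr hyx
        · exact Or.inl ⟨hy, hyx⟩
      have h1 : cbD^[ℓ] U₂ ⊆ {x} := by
        refine (cbD_iter_mono hsub ℓ).trans ?_
        refine (cbD_iter_union_singleton W x ℓ).trans ?_
        rw [hWempty]
        simp
      have h2 : cbD^[ℓ + 1] U₂ ⊆ cbD {x} := by
        rw [Function.iterate_succ', Function.comp_apply]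
        exact cbD_mono h1
      rw [cbD_singleton] at h2
      exact h2 hx2

/-- `cbDeriv` at a natural number equals iterates of `cbD`. -/
lemma cbDeriv_natCast (X : Type*) [TopologicalSpace X] (k : ℕ) :
    cbDeriv X (k : Ordinal) = cbD^[k] (Set.univ : Set X) := by
  induction k with
  | zero =>
      rw [Nat.cast_zero]
      unfold cbDeriv
      rw [Ordinal.limitRecOn_zero]
      rfl
  | succ k ih =>
      have : ((k + 1 : ℕ) : Ordinal) = Order.succ (k : Ordinal) := by
        rw [Nat.cast_succ, Ordinal.add_one_eq_succ]
      rw [this]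
      unfold cbDeriv
      rw [Ordinal.limitRecOn_succ]
      rw [Function.iterate_succ', Function.comp_apply, ← ih]
      rfl

end CBAux

/-- A scattered space of Cantor–Bendixson rank exactly `n` (with `0 < n < ω`) is
`n`-discrete but not `ℓ`-discrete for any `ℓ < n`. -/
theorem scattered_rank_n_discrete
    (n : ℕ) (hn : 0 < n) (X : Type) [TopologicalSpace X]
    [MetrizableSpace X] [SeparableSpace X]
    (h1 : cbDeriv X (n : Ordinal) = ∅)
    (h2 : ∀ ξ : Ordinal, ξ < (n : Ordinal) → cbDeriv X ξ ≠ ∅) :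
    NDiscrete n X ∧ ∀ ℓ, ℓ < n → ¬ NDiscrete ℓ X := by
  classical
  haveI : T1Space X := by
    letI := TopologicalSpace.metrizableSpaceMetric X
    infer_instance
  have hderiv : ∀ k : ℕ, cbDeriv X (k : Ordinal) = cbD^[k] (Set.univ : Set X) :=
    cbDeriv_natCast X
  constructor
  · -- `n`-discrete
    refine ⟨fun k => cbD^[(k : ℕ)] (Set.univ : Set X) \ cbD^[(k : ℕ) + 1] (Set.univ : Set X),
      ?_, ?_⟩
    · intro k
      rw [← cbD_eq_empty_iff_discrete]
      ext x
      simp only [Set.mem_empty_iff_false, iff_false]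
      rintro ⟨⟨hx1, hx2⟩, hxc⟩
      apply hx2
      rw [Function.iterate_succ', Function.comp_apply]
      refine ⟨hx1, ?_⟩
      exact closure_mono (Set.diff_subset_diff_left Set.diff_subset) hxc
    · rw [Set.eq_univ_iff_forall]
      intro x
      have hfin : ∃ k : ℕ, x ∉ cbD^[k] (Set.univ : Set X) := by
        refine ⟨n, ?_⟩
        rw [← hderiv, h1]
        exact Set.notMem_empty x
      classical
      let m := Nat.find hfin
      have hm : x ∉ cbD^[m] (Set.univ : Set X) := Nat.find_spec hfin
      have hm0 : m ≠ 0 := by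
        intro h0
        exact hm (by rw [h0]; trivial)
      have hmn : m ≤ n := by
        apply Nat.find_le
        rw [← hderiv, h1]
        exact Set.notMem_empty x
      have hm' : x ∈ cbD^[m - 1] (Set.univ : Set X) := by
        have := Nat.find_min hfin (m := m - 1) (by omega)
        simpa using this
      refine Set.mem_iUnion.2 ⟨⟨m - 1, by omega⟩, hm', ?_⟩
      have he : m - 1 + 1 = m := by omega
      simpa only [he] using hm
  · -- not `ℓ`-discrete for `ℓ < n`
    rintro ℓ hℓ ⟨D, hD, hcov⟩
    have hde : ∀ k, cbD (D k) = ∅ := fun k => (cbD_eq_empty_iff_discrete (D k)).2 (hD k)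
    have : cbD^[ℓ] (Set.univ : Set X) = ∅ :=
      cbD_iter_eq_empty_of_cover ℓ Set.univ isOpen_univ D hde (by rw [hcov])
    refine h2 (ℓ : Ordinal) ?_ ?_
    · exact_mod_cast hℓ
    · rw [hderiv ℓ, this]
end

section
/- Let X be a scattered separable metrizable space of Cantor–Bendixson rank ω. Then X is the union of countably many discrete subspaces, but X is not ℓ-discrete for any finite ℓ. -/
open TopologicalSpace MeasureTheory Topology

/-
The Cantor–Bendixson levels `X⁽ⁿ⁾ \ X⁽ⁿ⁺¹⁾` are discrete, and rank `ω` means they cover `X`.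
Conversely, if `X` is covered by `ℓ` discrete pieces, every neighbourhood of a point of `X⁽ᵏ⁾`
meets more than `k` of them: a point `x` of a piece `D` has a neighbourhood `V` with
`V ∩ D = {x}`, and if `x ∈ X⁽ᵏ⁺¹⁾` then `V \ {x}` is a neighbourhood of a point of `X⁽ᵏ⁾`
avoiding `D`. Hence `X⁽ℓ⁾ = ∅`, which is impossible for a space of rank `ω`.
-/

open Set

section CantorBendixson

variable {X : Type*} [TopologicalSpace X]

lemma cbDeriv_zero : cbDeriv X 0 = univ := by
  rw [cbDeriv, Ordinal.limitRecOn_zero]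

lemma cbDeriv_succ (o : Ordinal.{0}) :
    cbDeriv X (o + 1) = {x ∈ cbDeriv X o | x ∈ closure (cbDeriv X o \ {x})} := by
  rw [cbDeriv, Ordinal.limitRecOn_add_one]
  rfl

lemma cbDeriv_omega0 : cbDeriv X Ordinal.omega0 = ⋂ n : ℕ, cbDeriv X n := by
  rw [cbDeriv, Ordinal.limitRecOn_limit _ _ _ _ Ordinal.isSuccLimit_omega0]
  ext x
  simp only [mem_iInter, Subtype.forall, mem_Iio, Ordinal.lt_omega0]
  refine ⟨fun h n => h n ⟨n, rfl⟩, ?_⟩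
  rintro h _ ⟨n, rfl⟩
  exact h n

lemma discreteTopology_cbDeriv_diff_succ (o : Ordinal.{0}) :
    DiscreteTopology ↥(cbDeriv X o \ cbDeriv X (o + 1)) := by
  rw [discreteTopology_subtype_iff']
  rintro y ⟨hy, hy'⟩
  have hiso : y ∉ closure (cbDeriv X o \ {y}) := fun h => hy' (cbDeriv_succ (X := X) o ▸ ⟨hy, h⟩)
  obtain ⟨U, hU, hyU, hUy⟩ : ∃ U, IsOpen U ∧ y ∈ U ∧ ¬(U ∩ (cbDeriv X o \ {y})).Nonempty := by
    simpa only [mem_closure_iff, not_forall, exists_prop] using hiso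
  refine ⟨U, hU, Subset.antisymm (fun z ⟨hzU, hz, _⟩ => ?_) (singleton_subset_iff.2 ⟨hyU, hy, hy'⟩)⟩
  by_contra hzy
  exact hUy ⟨z, hzU, hz, hzy⟩

lemma exists_mem_cbDeriv_diff_succ_of_notMem {x : X} {n : ℕ} (hx : x ∉ cbDeriv X n) :
    ∃ k : ℕ, x ∈ cbDeriv X k \ cbDeriv X (k + 1) := by
  induction n with
  | zero => exact absurd (cbDeriv_zero (X := X) ▸ mem_univ x) hx
  | succ n ih =>
    by_cases hxn : x ∈ cbDeriv X n
    · exact ⟨n, hxn, by exact_mod_cast hx⟩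
    · exact ih hxn

lemma iUnion_cbDeriv_diff_succ_eq_univ (h : cbDeriv X Ordinal.omega0 = ∅) :
    ⋃ n : ℕ, cbDeriv X n \ cbDeriv X (n + 1) = univ := by
  refine eq_univ_of_forall fun x => mem_iUnion.2 ?_
  have hx : x ∉ ⋂ n : ℕ, cbDeriv X n := cbDeriv_omega0 (X := X) ▸ h ▸ notMem_empty x
  obtain ⟨n, hn⟩ := by simpa only [mem_iInter, not_forall] using hx
  exact exists_mem_cbDeriv_diff_succ_of_notMem hn

end CantorBendixson

section FinitelyManyDiscretePieces

variable {X ι : Type*} [TopologicalSpace X] [T1Space X] [Finite ι] {D : ι → Set X}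

lemma lt_ncard_setOf_inter_nonempty_of_mem_cbDeriv (hD : ∀ i, DiscreteTopology ↥(D i))
    (hcov : ⋃ i, D i = univ) (k : ℕ) {x : X} (hx : x ∈ cbDeriv X k) {U : Set X}
    (hU : IsOpen U) (hxU : x ∈ U) : k < {i | (U ∩ D i).Nonempty}.ncard := by
  induction k generalizing x U with
  | zero =>
    obtain ⟨i, hxi⟩ := mem_iUnion.1 (hcov ▸ mem_univ x)
    exact (ncard_pos (toFinite _)).2 ⟨i, x, hxU, hxi⟩
  | succ k ih =>
    obtain ⟨i, hxi⟩ := mem_iUnion.1 (hcov ▸ mem_univ x)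
    obtain ⟨V, hV, hVx⟩ := discreteTopology_subtype_iff'.1 (hD i) x hxi
    rw [Nat.cast_succ, cbDeriv_succ] at hx
    obtain ⟨y, ⟨hyU, hyV⟩, hyk, hyx⟩ :=
      mem_closure_iff.1 hx.2 (U ∩ V) (hU.inter hV) ⟨hxU, (hVx.ge rfl).1⟩
    have hlt : k < {j | ((U ∩ V) \ {x} ∩ D j).Nonempty}.ncard :=
      ih hyk ((hU.inter hV).sdiff isClosed_singleton) ⟨⟨hyU, hyV⟩, hyx⟩
    have hsub : {j | ((U ∩ V) \ {x} ∩ D j).Nonempty} ⊆ {j | (U ∩ D j).Nonempty} := by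
      rintro j ⟨z, ⟨⟨hzU, -⟩, -⟩, hzj⟩
      exact ⟨z, hzU, hzj⟩
    have hiA : i ∉ {j | ((U ∩ V) \ {x} ∩ D j).Nonempty} := by
      rintro ⟨z, ⟨⟨-, hzV⟩, hzx⟩, hzi⟩
      exact hzx (hVx.le ⟨hzV, hzi⟩)
    exact Nat.lt_of_le_of_lt hlt
      (ncard_lt_ncard ((ssubset_iff_of_subset hsub).2 ⟨i, ⟨x, hxU, hxi⟩, hiA⟩))

lemma cbDeriv_natCast_eq_empty_of_nDiscrete {ℓ : ℕ} (h : NDiscrete ℓ X) : cbDeriv X ℓ = ∅ := by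
  obtain ⟨D, hD, hcov⟩ := h
  refine eq_empty_of_forall_notMem fun x hx => ?_
  have hlt := lt_ncard_setOf_inter_nonempty_of_mem_cbDeriv hD hcov ℓ hx isOpen_univ (mem_univ x)
  have hle := ncard_le_card {i | (univ ∩ D i).Nonempty}
  rw [Nat.card_fin] at hle
  omega

end FinitelyManyDiscretePieces

theorem scattered_rank_omega_discrete_general
    (X : Type) [TopologicalSpace X] [MetrizableSpace X]
    (h1 : cbDeriv X Ordinal.omega0 = ∅)
    (h2 : ∀ ξ : Ordinal, ξ < Ordinal.omega0 → cbDeriv X ξ ≠ ∅) :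
    (∃ D : ℕ → Set X, (∀ k, DiscreteTopology ↥(D k)) ∧ ⋃ k, D k = Set.univ) ∧
    ∀ ℓ : ℕ, ¬ NDiscrete ℓ X :=
  ⟨⟨fun n => cbDeriv X n \ cbDeriv X (n + 1), fun n => discreteTopology_cbDeriv_diff_succ n,
      iUnion_cbDeriv_diff_succ_eq_univ h1⟩,
    fun ℓ hℓ => h2 ℓ (Ordinal.natCast_lt_omega0 ℓ) (cbDeriv_natCast_eq_empty_of_nDiscrete hℓ)⟩

/-- A scattered space of Cantor–Bendixson rank exactly `ω` is a countable union of discrete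
subspaces, but is not `ℓ`-discrete for any finite `ℓ`. -/
theorem scattered_rank_omega_discrete
    (X : Type) [TopologicalSpace X] [MetrizableSpace X] [SeparableSpace X]
    (h1 : cbDeriv X Ordinal.omega0 = ∅)
    (h2 : ∀ ξ : Ordinal, ξ < Ordinal.omega0 → cbDeriv X ξ ≠ ∅) :
    (∃ D : ℕ → Set X, (∀ k, DiscreteTopology ↥(D k)) ∧ ⋃ k, D k = Set.univ) ∧
    ∀ ℓ : ℕ, ¬ NDiscrete ℓ X :=
  scattered_rank_omega_discrete_general X h1 h2
end

section
/- (Harrington; determinacy-free form) Let Γ be a reasonably closed Wadge class in the Cantor space 2^ω, and let A, B ⊆ 2^ω be such that A ≤_W B and Γ = B↓. Then there exists an injective continuous function f : 2^ω → 2^ω such that A = f⁻¹[B]. -/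
/-- The Cantor space `2^ω`. -/
abbrev CantorSp : Type := ℕ → Bool

/-- Wadge reducibility in the Cantor space: `A ≤_W B`. -/
def WadgeLe (A B : Set CantorSp) : Prop :=
  ∃ f : CantorSp → CantorSp, Continuous f ∧ A = f ⁻¹' B

/-- `A↓`, the collection of sets Wadge reducible to `A`. -/
def wadgeDown (A : Set CantorSp) : Set (Set CantorSp) :=
  {B | WadgeLe B A}

/-- `Q i` is the set of sequences that are eventually equal to `i`.  Here `Q false`
plays the role of `Q₀` and `Q true` the role of `Q₁`. -/
def eventuallyConst (i : Bool) : Set CantorSp :=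
  {x | ∀ᶠ n in Filter.atTop, x n = i}

/-- For `x ∉ Q₀ ∪ Q₁`, `zeroBlock x n = (s, e)` where `[s, e)` is the `n`-th maximal
block of zeros (i.e. `false`s) of `x`, counting from the `0`-th block. -/
noncomputable def zeroBlock (x : CantorSp) : ℕ → ℕ × ℕ
  | 0 =>
      let s := sInf {k | x k = false}
      (s, sInf {k | s ≤ k ∧ x k = true})
  | n + 1 =>
      let s := sInf {k | (zeroBlock x n).2 < k ∧ x k = false}
      (s, sInf {k | s ≤ k ∧ x k = true})

/-- The map `φ`: `φ(x)(n) = 0` iff the `n`-th block of zeros of `x` has even length.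
(Its values are only relevant on `2^ω ∖ (Q₀ ∪ Q₁)`.) -/
noncomputable def phiMap (x : CantorSp) (n : ℕ) : Bool :=
  decide (((zeroBlock x n).2 - (zeroBlock x n).1) % 2 = 1)

/-- A Wadge class `Γ` in `2^ω` is *reasonably closed* if `φ⁻¹[A] ∪ Q₀ ∈ Γ` for every
`A ∈ Γ`. -/
def ReasonablyClosed (Γ : Set (Set CantorSp)) : Prop :=
  (∃ A : Set CantorSp, Γ = wadgeDown A) ∧
  ∀ A ∈ Γ,
    ({x | x ∉ eventuallyConst false ∧ x ∉ eventuallyConst true ∧ phiMap x ∈ A} ∪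
      eventuallyConst false) ∈ Γ

/-!
`C := φ⁻¹[A] ∪ Q₀` (with `φ` applied only off `Q₀ ∪ Q₁`) lies in `Γ = B↓`, so `C = g⁻¹[B]` for a
continuous `g`. For every finite word `t`, `t⌢0^ω ∈ Q₀ ⊆ C` while `t⌢1^ω ∈ Q₁` is not in `C`, so
`g` separates these two points and, by continuity, the cylinders of some length `k t` around them.
Code `x` by a sequence `ψ x = embed k x ∉ Q₀ ∪ Q₁` whose `n`-th block of zeros has odd length
iff `x n = 1`, so that `φ (ψ x) = x` and `ψ⁻¹[C] = A`. If the `n`-th block of `ψ x` starts, right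
after the word `t` coding `x ↾ n`, with `k t` copies of `¬ x n`, then sequences first differing at
`n` land in the two separated cylinders around `t⌢0^ω` and `t⌢1^ω`; hence `g ∘ ψ` is injective.
-/

open PiNat Filter Topology

section Cylinders

variable {E : ℕ → Type*} [∀ n, TopologicalSpace (E n)] [∀ n, DiscreteTopology (E n)]

theorem PiNat.exists_cylinder_subset_of_mem_nhds {x : ∀ n, E n} {s : Set (∀ n, E n)}
    (hs : s ∈ 𝓝 x) : ∃ n, cylinder x n ⊆ s := by
  obtain ⟨_, ⟨y, n, rfl⟩, hxy, hsub⟩ :=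
    (isTopologicalBasis_cylinders E).mem_nhds_iff.1 hs
  exact ⟨n, (mem_cylinder_iff_eq.1 hxy).symm ▸ hsub⟩

theorem PiNat.continuous_of_forall_mem_cylinder {β : Type*} [TopologicalSpace β]
    {F : (∀ n, E n) → β} {n : ℕ} (hF : ∀ x, ∀ y ∈ cylinder x n, F y = F x) :
    Continuous F :=
  continuous_iff_continuousAt.2 fun x => continuousAt_const.congr <|
    eventually_of_mem ((isOpen_cylinder E x n).mem_nhds (self_mem_cylinder x n))
      fun y hy => (hF x y hy).symm

theorem Continuous.exists_cylinder_apply_ne {Y : Type*} [TopologicalSpace Y] [T2Space Y]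
    {g : (∀ n, E n) → Y} (hg : Continuous g) {u v : ∀ n, E n} (huv : g u ≠ g v) :
    ∃ N, ∀ w ∈ cylinder u N, ∀ w' ∈ cylinder v N, g w ≠ g w' := by
  obtain ⟨U, V, hU, hV, hUV⟩ := t2_separation_nhds huv
  obtain ⟨m, hm⟩ := exists_cylinder_subset_of_mem_nhds (hg.continuousAt.preimage_mem_nhds hU)
  obtain ⟨n, hn⟩ := exists_cylinder_subset_of_mem_nhds (hg.continuousAt.preimage_mem_nhds hV)
  refine ⟨max m n, fun w hw w' hw' hww' => hUV.ne_of_mem ?_ ?_ hww'⟩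
  · exact hm (cylinder_anti u (le_max_left m n) hw)
  · exact hn (cylinder_anti v (le_max_right m n) hw')

end Cylinders

namespace Harrington

theorem zeroBlock_eq_of_blocks {y : CantorSp} {a e : ℕ → ℕ} (hae : ∀ n, a n < e n)
    (hea : ∀ n, e n < a (n + 1)) (hinit : ∀ j < a 0, y j = true)
    (hzero : ∀ n j, a n ≤ j → j < e n → y j = false)
    (hgap : ∀ n j, e n ≤ j → j < a (n + 1) → y j = true) (n : ℕ) :
    zeroBlock y n = (a n, e n) := by
  have hend : ∀ n, sInf {j | a n ≤ j ∧ y j = true} = e n := fun n =>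
    IsLeast.csInf_eq ⟨⟨(hae n).le, hgap n _ le_rfl (hea n)⟩, fun j ⟨hj, hyj⟩ =>
      not_lt.1 fun hlt => by simp [hzero n j hj hlt] at hyj⟩
  induction n with
  | zero =>
    have hstart : sInf {j | y j = false} = a 0 :=
      IsLeast.csInf_eq ⟨hzero 0 _ le_rfl (hae 0), fun j hj =>
        not_lt.1 fun hlt => by simp [hinit j hlt] at hj⟩
    simp only [zeroBlock, hstart, hend]
  | succ n ih =>
    have hstart : sInf {j | (zeroBlock y n).2 < j ∧ y j = false} = a (n + 1) := by
      rw [ih]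
      exact IsLeast.csInf_eq ⟨⟨hea n, hzero _ _ le_rfl (hae _)⟩, fun j ⟨hj, hyj⟩ =>
        not_lt.1 fun hlt => by simp [hgap n j hj.le hlt] at hyj⟩
    simp only [zeroBlock, hstart, hend]

theorem notMem_eventuallyConst_of_frequently {y : CantorSp} {i : Bool}
    (h : ∃ᶠ n in atTop, y n = !i) : y ∉ eventuallyConst i := fun hy => by
  obtain ⟨n, hn, hn'⟩ := (h.and_eventually hy).exists
  simp [hn'] at hn

def appendConst (t : List Bool) (b : Bool) : CantorSp := fun j => t.getD j b

theorem appendConst_mem_eventuallyConst (t : List Bool) (b : Bool) :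
    appendConst t b ∈ eventuallyConst b :=
  eventually_atTop.2 ⟨t.length, fun _ hj => List.getD_eq_default t b hj⟩

def block (c ℓ : ℕ) : List Bool :=
  List.ofFn fun i : Fin (c + ℓ + 1) => decide (i < c ∨ c + ℓ ≤ i)

/- The block coding the bit `b` starts with `m` copies of `!b` (in `onesLen` ones or in the zero
run) and its zero run has odd length iff `b`. -/
def onesLen (m : ℕ) (b : Bool) : ℕ := if b then 0 else m

def zerosLen (m : ℕ) (b : Bool) : ℕ := if b then 2 * m + 1 else 2

variable (k : List Bool → ℕ) (x : CantorSp)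

def word : ℕ → List Bool
  | 0 => []
  | n + 1 => word n ++ block (onesLen (k (word n)) (x n)) (zerosLen (k (word n)) (x n))

def embed (j : ℕ) : Bool := (word k x (j + 1)).getD j false

-- The zero run of the `n`-th block of `embed k x` occupies `[zeroStart k x n, zeroEnd k x n)`.
def zeroStart (n : ℕ) : ℕ := (word k x n).length + onesLen (k (word k x n)) (x n)

def zeroEnd (n : ℕ) : ℕ := zeroStart k x n + zerosLen (k (word k x n)) (x n)

theorem length_word_le_zeroStart (n : ℕ) : (word k x n).length ≤ zeroStart k x n :=
  Nat.le_add_right _ _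

theorem zeroStart_lt_zeroEnd (n : ℕ) : zeroStart k x n < zeroEnd k x n := by
  simp only [zeroEnd, zerosLen]; split <;> omega

theorem length_word_succ (n : ℕ) : (word k x (n + 1)).length = zeroEnd k x n + 1 := by
  simp [word, block, zeroEnd, zeroStart]; omega

theorem le_length_word (n : ℕ) : n ≤ (word k x n).length := by
  induction n with
  | zero => simp [word]
  | succ n ih =>
    have := zeroStart_lt_zeroEnd k x n
    simp only [length_word_succ, zeroStart] at *
    omega

theorem word_prefix_of_le {m n : ℕ} (h : m ≤ n) : word k x m <+: word k x n := by
  induction n, h using Nat.le_induction with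
  | base => exact List.prefix_refl _
  | succ n _ ih => exact ih.trans (List.prefix_append _ _)

theorem embed_apply_of_lt_length {n j : ℕ} (hj : j < (word k x n).length) :
    embed k x j = (word k x n)[j] := by
  have hj' : j < (word k x (j + 1)).length :=
    (le_length_word k x (j + 1)).trans_lt' j.lt_succ_self
  rw [embed, List.getD_eq_getElem _ _ hj']
  rcases le_total n (j + 1) with h | h
  · exact ((word_prefix_of_le k x h).getElem hj).symm
  · exact (word_prefix_of_le k x h).getElem hj'

theorem embed_apply_of_le_zeroEnd {n j : ℕ} (h₁ : (word k x n).length ≤ j)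
    (h₂ : j ≤ zeroEnd k x n) :
    embed k x j = decide (j < zeroStart k x n ∨ zeroEnd k x n ≤ j) := by
  have hj : j < (word k x (n + 1)).length := by rw [length_word_succ]; omega
  rw [embed_apply_of_lt_length k x hj]
  simp only [word, List.getElem_append_right h₁, block, List.getElem_ofFn, zeroEnd, zeroStart]
  exact decide_eq_decide.2 (by omega)

theorem zeroBlock_embed (n : ℕ) : zeroBlock (embed k x) n = (zeroStart k x n, zeroEnd k x n) := by
  have hlen := length_word_le_zeroStart k x
  have hae := zeroStart_lt_zeroEnd k x
  refine zeroBlock_eq_of_blocks hae (fun n => ?_) (fun j hj => ?_) (fun n j h₁ h₂ => ?_)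
    (fun n j h₁ h₂ => ?_) n
  · have := hlen (n + 1); rw [length_word_succ] at this; omega
  · rw [embed_apply_of_le_zeroEnd k x (n := 0) (by simp [word]) (by have := hae 0; omega)]
    simp [hj]
  · rw [embed_apply_of_le_zeroEnd k x ((hlen n).trans h₁) h₂.le]; simp; omega
  · rcases Nat.lt_or_ge j (word k x (n + 1)).length with h | h
    · rw [length_word_succ] at h
      rw [embed_apply_of_le_zeroEnd k x ((hlen n).trans ((hae n).le.trans h₁)) (by omega)]
      simp [h₁]
    · rw [embed_apply_of_le_zeroEnd k x h (by have := hae (n + 1); omega)]; simp [h₂]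

theorem phiMap_embed : phiMap (embed k x) = x := by
  funext n
  simp only [phiMap, zeroBlock_embed, zeroEnd, Nat.add_sub_cancel_left, zerosLen]
  cases x n <;> simp

theorem embed_notMem_eventuallyConst (i : Bool) : embed k x ∉ eventuallyConst i := by
  refine notMem_eventuallyConst_of_frequently (frequently_atTop.2 fun N => ?_)
  have hN : N ≤ zeroStart k x N :=
    (le_length_word k x N).trans (length_word_le_zeroStart k x N)
  have hae := zeroStart_lt_zeroEnd k x N
  cases i
  · refine ⟨zeroEnd k x N, hN.trans hae.le, ?_⟩
    rw [embed_apply_of_le_zeroEnd k x ((length_word_le_zeroStart k x N).trans hae.le) le_rfl]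
    simp
  · refine ⟨zeroStart k x N, hN, ?_⟩
    rw [embed_apply_of_le_zeroEnd k x (length_word_le_zeroStart k x N) hae.le]
    simpa using hae

variable {x}

theorem word_congr {y : CantorSp} {n : ℕ} (hy : y ∈ cylinder x n) :
    word k y n = word k x n := by
  induction n with
  | zero => rfl
  | succ n ih =>
    simp only [word, ih (cylinder_anti x n.le_succ hy), hy n n.lt_succ_self]

variable (x)

theorem continuous_embed : Continuous (embed k) :=
  continuous_pi fun j => continuous_of_forall_mem_cylinder (n := j + 1) fun x y hy => by
    simp only [embed, word_congr k hy]

theorem embed_mem_cylinder_appendConst (n : ℕ) :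
    embed k x ∈ cylinder (appendConst (word k x n) (!x n))
      ((word k x n).length + k (word k x n)) := by
  intro j hj
  rcases Nat.lt_or_ge j (word k x n).length with h | h
  · rw [embed_apply_of_lt_length k x h, appendConst, List.getD_eq_getElem _ _ h]
  · rw [appendConst, List.getD_eq_default _ _ h]
    have hj' : j ≤ zeroEnd k x n := by
      simp only [zeroEnd, zeroStart, onesLen, zerosLen]; split <;> omega
    rw [embed_apply_of_le_zeroEnd k x h hj']
    simp only [zeroEnd, zeroStart, onesLen, zerosLen]
    by_cases hb : x n <;> simp [hb] <;> omega

theorem injective_comp_embed {Y : Type*} {g : CantorSp → Y}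
    (hk : ∀ t, ∀ w ∈ cylinder (appendConst t false) (k t),
      ∀ w' ∈ cylinder (appendConst t true) (k t), g w ≠ g w') :
    Function.Injective (g ∘ embed k) := by
  intro x y hxy
  by_contra hne
  set n := firstDiff x y
  have hw : word k y n = word k x n := word_congr k fun i hi => (apply_eq_of_lt_firstDiff hi).symm
  have hx := cylinder_anti _ (Nat.le_add_left _ _) (embed_mem_cylinder_appendConst k x n)
  have hy := cylinder_anti _ (Nat.le_add_left _ _) (embed_mem_cylinder_appendConst k y n)
  rw [hw] at hy
  have hxy' : g (embed k x) = g (embed k y) := hxy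
  cases hxn : x n <;> cases hyn : y n <;>
    simp only [hxn, hyn, Bool.not_false, Bool.not_true] at hx hy
  · exact apply_firstDiff_ne hne (hxn.trans hyn.symm)
  · exact hk _ _ hy _ hx hxy'.symm
  · exact hk _ _ hx _ hy hxy'
  · exact apply_firstDiff_ne hne (hxn.trans hyn.symm)

def phiPullback (A : Set CantorSp) : Set CantorSp :=
  {x | x ∉ eventuallyConst false ∧ x ∉ eventuallyConst true ∧ phiMap x ∈ A} ∪
    eventuallyConst false

theorem appendConst_false_mem_phiPullback (A : Set CantorSp) (t : List Bool) :
    appendConst t false ∈ phiPullback A :=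
  Or.inr (appendConst_mem_eventuallyConst t false)

theorem appendConst_true_notMem_phiPullback (A : Set CantorSp) (t : List Bool) :
    appendConst t true ∉ phiPullback A := by
  rintro (⟨-, h, -⟩ | h)
  · exact h (appendConst_mem_eventuallyConst t true)
  · exact notMem_eventuallyConst_of_frequently
      (appendConst_mem_eventuallyConst t true).frequently h

theorem embed_mem_phiPullback_iff (A : Set CantorSp) :
    embed k x ∈ phiPullback A ↔ x ∈ A := by
  simp [phiPullback, embed_notMem_eventuallyConst, phiMap_embed]

end Harrington

open Harrington

theorem stmt15 (Γ : Set (Set CantorSp)) (hΓ : ReasonablyClosed Γ)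
    (A B : Set CantorSp) (hAB : WadgeLe A B) (hB : Γ = wadgeDown B) :
    ∃ f : CantorSp → CantorSp, Function.Injective f ∧ Continuous f ∧ A = f ⁻¹' B := by
  obtain ⟨g, hg, hgB⟩ : phiPullback A ∈ wadgeDown B := hB ▸ hΓ.2 A (hB ▸ hAB)
  have hsep (t : List Bool) : g (appendConst t false) ≠ g (appendConst t true) := by
    have h₀ := appendConst_false_mem_phiPullback A t
    have h₁ := appendConst_true_notMem_phiPullback A t
    rw [hgB] at h₀ h₁
    exact ne_of_mem_of_not_mem (s := B) h₀ h₁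
  choose k hk using fun t => hg.exists_cylinder_apply_ne (hsep t)
  refine ⟨g ∘ embed k, injective_comp_embed k hk, hg.comp (continuous_embed k), ?_⟩
  ext x
  rw [Set.mem_preimage, Function.comp_apply, ← Set.mem_preimage, ← hgB,
    embed_mem_phiPullback_iff]
end

section
/- (Medini–Vidnyánszky; in ZFC) There exists a zero-dimensional separable metrizable space X (which may be taken to be a subspace of the Cantor space 2^ω) that is not σ-homogeneous: X cannot be written as a countable union of homogeneous subspaces. -/
open TopologicalSpace MeasureTheory Topology

/-!
Index the at most `𝔠` closed sets `F ⊆ α × α` of a second-countable space `α` of size `𝔠` by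
ordinals below `𝔠`. Every homeomorphism `h` of a subspace of `α` is contained in the partial
injection `uniquePairs F`, where `F` is the closure of the graph of `h`. By transfinite recursion
choose `x_i` distinct from all earlier points and from their partners under the partial
injections enumerated so far. Then each partial injection moves fewer than `𝔠` points of
`X = {x_i}` to other points of `X`. In a homogeneous subspace `S ⊆ X` with two points, some
homeomorphism moves a nonempty open set of fewer than `𝔠` points; its translates cover `S`,
and by the Lindelöf property and `cf 𝔠 > ℵ₀` we get `|S| < 𝔠`. Since `|X| = 𝔠`, again by
`cf 𝔠 > ℵ₀`, countably many such `S` cannot cover `X`.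
-/

open Cardinal Set

universe u

namespace Cardinal

theorem aleph0_lt_cof_continuum : ℵ₀ < (𝔠 : Cardinal.{u}).ord.cof := by
  by_contra! h
  have := (lt_power_cof_ord aleph0_le_continuum).trans_le (power_le_power_left continuum_ne_zero h)
  rw [continuum_power_aleph0] at this
  exact this.false

theorem mk_iUnion_lt_of_countable {α : Type u} {ι : Sort*} [Countable ι] {κ : Cardinal.{u}}
    (hκ : ℵ₀ < κ.ord.cof) {s : ι → Set α} (hs : ∀ i, #(s i) < κ) : #(⋃ i, s i) < κ := by
  rw [← sUnion_range, sUnion_eq_iUnion]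
  have := (countable_range s).to_subtype
  have hrange : #(range s) < κ.ord.cof := mk_le_aleph0.trans_lt hκ
  refine (mk_iUnion_le _).trans_lt <| mul_lt_of_lt (hκ.le.trans (Ordinal.cof_ord_le κ))
    (hrange.trans_le (Ordinal.cof_ord_le κ)) (iSup_lt_of_lt_cof_ord hrange ?_)
  rintro ⟨_, i, rfl⟩
  exact hs i

theorem mk_iUnion_lt_of_le {α ι : Type u} {κ μ : Cardinal.{u}} (hκ : ℵ₀ ≤ κ) (hι : #ι < κ)
    {s : ι → Set α} (hμ : μ < κ) (hs : ∀ i, #(s i) ≤ μ) : #(⋃ i, s i) < κ :=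
  (mk_iUnion_le s).trans_lt <| mul_lt_of_lt hκ hι <| (ciSup_le' hs).trans_lt hμ

end Cardinal

theorem TopologicalSpace.Closeds.mk_le_continuum (α : Type u) [TopologicalSpace α]
    [SecondCountableTopology α] : #(Closeds α) ≤ 𝔠 := by
  obtain ⟨B, hBc, -, hB⟩ := exists_countable_basis α
  let code (F : Closeds α) : Set B := {b | (b : Set α) ⊆ (F : Set α)ᶜ}
  have hcode : ∀ F G, code F ⊆ code G → (F : Set α)ᶜ ⊆ (G : Set α)ᶜ := by
    intro F G h x hx
    obtain ⟨b, hb, hxb, hbF⟩ := hB.exists_subset_of_mem_open hx F.isClosed.isOpen_compl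
    exact h (show ⟨b, hb⟩ ∈ code F from hbF) hxb
  have hinj : Function.Injective code := fun F G h =>
    Closeds.ext (compl_injective ((hcode F G h.le).antisymm (hcode G F h.ge)))
  calc #(Closeds α) ≤ #(Set B) := mk_le_of_injective hinj
    _ = 2 ^ #B := mk_set
    _ ≤ 2 ^ ℵ₀ := power_le_power_left two_ne_zero (mk_le_aleph0_iff.2 hBc.to_subtype)
    _ = 𝔠 := two_power_aleph0

theorem WellFoundedLT.exists_forall_notMem_image_Iio {I α : Type*} [Preorder I] [WellFoundedLT I]
    (bad : I → Set α → Set α) (h : ∀ i (v : Iio i → α), (bad i (range v))ᶜ.Nonempty) :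
    ∃ x : I → α, ∀ i, x i ∉ bad i (x '' Iio i) := by
  let x : I → α := WellFoundedLT.fix fun i prev => (h i fun j => prev j j.2).some
  refine ⟨x, fun i => ?_⟩
  have hx : x i = (h i fun j => x j).some := WellFoundedLT.fix_eq _ i
  rw [hx, image_eq_range]
  exact (h i fun j => x j).some_mem

section Relations

variable {α : Type u}

def uniquePairs (F : Set (α × α)) : Set (α × α) :=
  {q ∈ F | (∀ y, (q.1, y) ∈ F → y = q.2) ∧ ∀ x, (x, q.2) ∈ F → x = q.1}

theorem uniquePairs_right_subsingleton (F : Set (α × α)) (x : α) :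
    {y | (x, y) ∈ uniquePairs F}.Subsingleton :=
  fun _ hy _ hy' => (hy.2.1 _ hy'.1).symm

theorem uniquePairs_left_subsingleton (F : Set (α × α)) (y : α) :
    {x | (x, y) ∈ uniquePairs F}.Subsingleton :=
  fun _ hx _ hx' => (hx.2.2 _ hx'.1).symm

def movedPoints (R : Set (α × α)) (X : Set α) : Set α :=
  {x ∈ X | ∃ y ∈ X, x ≠ y ∧ (x, y) ∈ R}

variable {ι : Type u} {R : ι → Set (α × α)}

theorem mk_setOf_exists_related_lt (hR₁ : ∀ c x, {y | (x, y) ∈ R c}.Subsingleton)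
    (hR₂ : ∀ c y, {x | (x, y) ∈ R c}.Subsingleton) {κ : Cardinal.{u}} (hκ : ℵ₀ ≤ κ)
    {S : Set ι} (hS : #S < κ) {P : Set α} (hP : #P < κ) :
    #{x | ∃ c ∈ S, ∃ y ∈ P, (x, y) ∈ R c ∨ (y, x) ∈ R c} < κ := by
  have hunion : {x | ∃ c ∈ S, ∃ y ∈ P, (x, y) ∈ R c ∨ (y, x) ∈ R c} =
      ⋃ p : S × P, {x | (x, p.2.1) ∈ R p.1} ∪ {x | (p.2.1, x) ∈ R p.1} := by
    ext x
    simp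
  rw [hunion]
  refine mk_iUnion_lt_of_le (μ := 2) hκ (by simpa using mul_lt_of_lt hκ hS hP)
    (ofNat_lt_aleph0.trans_le hκ) fun p => (mk_union_le _ _).trans ?_
  calc _ ≤ (1 : Cardinal) + 1 := add_le_add (mk_le_one_iff_set_subsingleton.2 (hR₂ _ _))
        (mk_le_one_iff_set_subsingleton.2 (hR₁ _ _))
    _ = 2 := one_add_one_eq_two

theorem exists_mk_eq_forall_mk_movedPoints_lt (hα : ℵ₀ ≤ #α) (hι : #ι ≤ #α)
    (hR₁ : ∀ c x, {y | (x, y) ∈ R c}.Subsingleton)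
    (hR₂ : ∀ c y, {x | (x, y) ∈ R c}.Subsingleton) :
    ∃ X : Set α, #X = #α ∧ ∀ c, #(movedPoints (R c) X) < #α := by
  let I := (#α).ord.ToType
  have hI : (#I).ord = Ordinal.type ((· < ·) : I → I → Prop) := by
    rw [mk_ord_toType, Ordinal.type_toType]
  have hIio (i : I) : #(Iio i) < #α := (mk_Iio_lt i hI).trans_eq (mk_ord_toType _)
  have hIic (i : I) : #(Iic i) < #α :=
    (mk_Iic_lt i hI ((mk_ord_toType _).symm ▸ hα)).trans_eq (mk_ord_toType _)
  obtain ⟨enc⟩ : Nonempty (ι ↪ I) := by rwa [← le_def, mk_ord_toType]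
  let bad (i : I) (P : Set α) : Set α :=
    P ∪ {x | ∃ c ∈ enc ⁻¹' Iic i, ∃ y ∈ P, (x, y) ∈ R c ∨ (y, x) ∈ R c}
  obtain ⟨x, hx⟩ := WellFoundedLT.exists_forall_notMem_image_Iio bad fun i v => by
    have hv : #(range v) < #α := mk_range_le.trans_lt (hIio i)
    have hcodes := (mk_preimage_of_injective enc _ enc.injective).trans_lt (hIic i)
    exact compl_nonempty_of_mk_lt_mk <| (mk_union_le _ _).trans_lt <|
      add_lt_of_lt hα hv (mk_setOf_exists_related_lt hR₁ hR₂ hα hcodes hv)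
  have hinj : Function.Injective x := by
    intro a b hab
    by_contra hne
    rcases lt_or_gt_of_ne hne with h | h
    · exact hx b (Or.inl ⟨a, h, hab⟩)
    · exact hx a (Or.inl ⟨b, h, hab.symm⟩)
  refine ⟨range x, (mk_range_eq x hinj).trans (mk_ord_toType _), fun c => ?_⟩
  have hmoved : movedPoints (R c) (range x) ⊆ x '' Iic (enc c) := by
    rintro _ ⟨⟨a, rfl⟩, _, ⟨b, rfl⟩, hab, hR⟩
    refine ⟨a, mem_Iic.2 (le_of_not_gt fun hca => ?_), rfl⟩
    rcases lt_or_gt_of_ne (ne_of_apply_ne x hab) with h | h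
    · exact hx b (Or.inr ⟨c, (hca.trans h).le, x a, ⟨a, h, rfl⟩, Or.inr hR⟩)
    · exact hx a (Or.inr ⟨c, hca.le, x b, ⟨b, h, rfl⟩, Or.inl hR⟩)
  exact (mk_le_mk_of_subset hmoved).trans_lt (mk_image_le.trans_lt (hIic _))

end Relations

section Graph

variable {Y : Type*} [TopologicalSpace Y] {α : Type*} [TopologicalSpace α] [T2Space α]

theorem eq_of_mem_closure_range_prod {f k : Y → α} (hf : IsEmbedding f) (hk : Continuous k)
    {y : Y} {b : α} (hb : (f y, b) ∈ closure (range fun w => (f w, k w))) : b = k y := by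
  have hgraph : IsClosed {p : Y × α | k p.1 = p.2} :=
    isClosed_eq (hk.comp continuous_fst) continuous_snd
  have hrange : range (fun w => (f w, k w)) = Prod.map f id '' {p : Y × α | k p.1 = p.2} := by
    ext q
    simp [eq_comm]
  have : (y, b) ∈ closure {p : Y × α | k p.1 = p.2} := by
    rw [(hf.prodMap .id).closure_eq_preimage_closure_image]
    exact hrange ▸ hb
  exact (hgraph.closure_eq ▸ this).symm

theorem mem_uniquePairs_closure_graph {f : Y → α} (hf : IsEmbedding f) (h : Y ≃ₜ Y) (y : Y) :
    (f y, f (h y)) ∈ uniquePairs (closure (range fun w => (f w, f (h w)))) := by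
  refine ⟨subset_closure ⟨y, rfl⟩,
    fun b hb => eq_of_mem_closure_range_prod hf (hf.continuous.comp h.continuous) hb,
    fun a ha => ?_⟩
  have hswap : (f (h y), a) ∈ closure (range fun v => (f v, f (h.symm v))) :=
    map_mem_closure (f := Prod.swap) continuous_swap ha (by rintro _ ⟨w, rfl⟩; exact ⟨h w, by simp⟩)
  simpa using eq_of_mem_closure_range_prod hf (hf.continuous.comp h.symm.continuous) hswap

end Graph

theorem mk_setOf_apply_ne_le {Y α : Type u} [TopologicalSpace Y] [TopologicalSpace α] [T2Space α]
    {f : Y → α} (hf : IsEmbedding f) {X : Set α} (hfX : range f ⊆ X) (h : Y ≃ₜ Y) :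
    #{y | h y ≠ y} ≤ #(movedPoints (uniquePairs (closure (range fun w => (f w, f (h w))))) X) := by
  rw [← mk_image_eq hf.injective]
  refine mk_le_mk_of_subset ?_
  rintro _ ⟨y, hy, rfl⟩
  exact ⟨hfX ⟨y, rfl⟩, f (h y), hfX ⟨h y, rfl⟩, hf.injective.ne (Ne.symm hy),
    mem_uniquePairs_closure_graph hf h y⟩

theorem HomogeneousSpace.mk_lt {Y : Type u} [TopologicalSpace Y] [T2Space Y]
    [SecondCountableTopology Y] (hY : HomogeneousSpace Y) {κ : Cardinal.{u}} (hκ : ℵ₀ < κ.ord.cof)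
    (hmoved : ∀ h : Y ≃ₜ Y, #{y | h y ≠ y} < κ) : #Y < κ := by
  rcases subsingleton_or_nontrivial Y with hY₁ | ⟨a, b, hab⟩
  · exact (le_one_iff_subsingleton.2 hY₁).trans_lt
      (one_lt_aleph0.trans (hκ.trans_le (Ordinal.cof_ord_le κ)))
  obtain ⟨h, rfl⟩ := hY a b
  have hsmall (w : Y) : ∃ U : Set Y, IsOpen U ∧ w ∈ U ∧ #U < κ := by
    obtain ⟨g, rfl⟩ := hY a w
    exact ⟨g '' {y | h y ≠ y}, g.isOpenMap _ (isOpen_ne_fun h.continuous continuous_id),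
      mem_image_of_mem g (Ne.symm hab), mk_image_le.trans_lt (hmoved h)⟩
  choose U hUo hUw hUκ using hsmall
  obtain ⟨T, hT, hTU⟩ := isOpen_iUnion_countable U hUo
  have hcover : ⋃ w ∈ T, U w = Set.univ := hTU.trans (iUnion_eq_univ_iff.2 fun w => ⟨w, hUw w⟩)
  have := hT.to_subtype
  rw [← mk_univ, ← hcover, biUnion_eq_iUnion]
  exact mk_iUnion_lt_of_countable hκ fun w => hUκ w

theorem exists_not_sigmaHomogeneous {α : Type u} [TopologicalSpace α] [T2Space α]
    [SecondCountableTopology α] (hα : #α = 𝔠) : ∃ X : Set α, ¬ SigmaHomogeneous X := by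
  obtain ⟨X, hXα, hX⟩ := exists_mk_eq_forall_mk_movedPoints_lt (hα ▸ aleph0_le_continuum)
    (hα ▸ Closeds.mk_le_continuum (α × α)) (R := fun F : Closeds (α × α) => uniquePairs F)
    (fun F => uniquePairs_right_subsingleton (F : Set (α × α)))
    (fun F => uniquePairs_left_subsingleton (F : Set (α × α)))
  refine ⟨X, fun ⟨Y, hY, hcover⟩ => ?_⟩
  have hYsmall (n : ℕ) : #(Y n) < 𝔠 := by
    refine HomogeneousSpace.mk_lt (hY n) aleph0_lt_cof_continuum fun h => ?_
    have hf : IsEmbedding (Subtype.val ∘ Subtype.val : Y n → α) :=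
      IsEmbedding.subtypeVal.comp IsEmbedding.subtypeVal
    exact (mk_setOf_apply_ne_le hf (by rintro _ ⟨y, rfl⟩; exact y.1.2) h).trans_lt
      (hα ▸ hX ⟨closure _, isClosed_closure⟩)
  have := mk_iUnion_lt_of_countable aleph0_lt_cof_continuum hYsmall
  rw [hcover, mk_univ, hXα, hα] at this
  exact this.false

theorem ZeroDimensionalSpace.of_isInducing {α β : Type*} [TopologicalSpace α] [TopologicalSpace β]
    (hβ : ZeroDimensionalSpace β) {f : α → β} (hf : IsInducing f) : ZeroDimensionalSpace α :=
  (hβ.isInducing hf).of_isOpen_of_subset (fun _ hs => hs.isOpen)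
    (by rintro _ ⟨s, hs, rfl⟩; exact hs.preimage hf.continuous)

/-- (Medini–Vidnyánszky, in ZFC) There exists a zero-dimensional separable metrizable
space, which may be taken to be a subspace of the Cantor space `2^ω`, that is not
σ-homogeneous. -/
theorem exists_zero_dimensional_not_sigma_homogeneous :
    ∃ X : Set (ℕ → Bool),
      ZeroDimensionalSpace ↥X ∧ SeparableSpace ↥X ∧ MetrizableSpace ↥X ∧
      ¬ SigmaHomogeneous ↥X := by
  obtain ⟨X, hX⟩ := exists_not_sigmaHomogeneous (α := ℕ → Bool) (by simp)
  have hcantor : ZeroDimensionalSpace (ℕ → Bool) := isTopologicalBasis_isClopen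
  exact ⟨X, hcantor.of_isInducing IsInducing.subtypeVal, inferInstance, inferInstance, hX⟩
end
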